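/- arXiv:1610.06680 — 2 statements merged into one kernel-verified Lean document; each statement's English description precedes it below -/
import Mathlib

section
/- Let Ω̃ ⊂ ℝⁿ be measurable, and let β : Ω̃ → ℝ be continuous with 0 < β* ≤ β(x) ≤ β^* < 1 for all x. Define the variable-order Gagliardo seminorm |u|²_{H^{β(·)}} = ∫_{Ω̃}∫_{Ω̃} (u(y)−u(x))²/|y−x|^{n+2β(x)} dy dx and the norm ‖u‖_{H^{β(·)}} = ‖u‖_{L²} + |u|_{H^{β(·)}}. Then there is a constant C = C(n, β*, β^*) ≥ 1 such that C^{−1} ‖u‖_{H^{β*}(Ω̃)} ≤ ‖u‖_{H^{β(·)}(Ω̃)} ≤ C ‖u‖_{H^{β^*}(Ω̃)} for every measurable u : Ω̃ → ℝ; in particular H^{β^*}(Ω̃) ⊂ H^{β(·)}(Ω̃) ⊂ H^{β*}(Ω̃). -/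
open MeasureTheory Set
open scoped ENNReal
noncomputable section

abbrev Euc (n : ℕ) := EuclideanSpace ℝ (Fin n)

/-- Variable-order Gagliardo seminorm squared. -/
def gagVarSq (n : ℕ) (Ω : Set (Euc n)) (p : Euc n → ℝ) (u : Euc n → ℝ) : ℝ≥0∞ :=
  ∫⁻ x in Ω, ∫⁻ y in Ω,
    ENNReal.ofReal ((u y - u x) ^ 2 / dist y x ^ ((n : ℝ) + 2 * p x))

/-- Squared L² norm. -/
def l2Sq (n : ℕ) (Ω : Set (Euc n)) (u : Euc n → ℝ) : ℝ≥0∞ :=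
  ∫⁻ x in Ω, ENNReal.ofReal ((u x) ^ 2)

/-- The (variable-order) Sobolev norm ‖u‖ = ‖u‖_{L²} + |u|_{H^{p(·)}}. -/
def sobNorm (n : ℕ) (Ω : Set (Euc n)) (p : Euc n → ℝ) (u : Euc n → ℝ) : ℝ≥0∞ :=
  l2Sq n Ω u ^ (1/2 : ℝ) + gagVarSq n Ω p u ^ (1/2 : ℝ)

/-!
For `s ≤ p ≤ q`, split the Gagliardo integrand at `|y - x| = 1`. Near the diagonal the kernel
with the larger exponent is the larger one. Away from it, `(u y - u x)² ≤ 2 u(x)² + 2 u(y)²` and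
`|y - x|^{-(n + 2 p(x))} ≤ |y - x|^{-(n + 2 s)}`, whose integral over `|z| ≥ 1` is finite because
`n + 2 s > n`. Hence `|u|²_p ≤ |u|²_q + K ‖u‖²_{L²}`, and taking square roots compares the norms;
apply this to `(β_*, β)` and `(β, β^*)`.
-/
def tailKernel (r d : ℝ) : ℝ := if 1 ≤ d then d ^ (-r) else 0

lemma tailKernel_nonneg (r d : ℝ) : 0 ≤ tailKernel r d := by
  unfold tailKernel; split_ifs <;> positivity

lemma measurable_tailKernel (r : ℝ) : Measurable (tailKernel r) :=
  Measurable.ite measurableSet_Ici (by fun_prop) measurable_const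

lemma tailKernel_le_two_rpow_mul {r t : ℝ} (hr : 0 ≤ r) (ht : 0 ≤ t) :
    tailKernel r t ≤ 2 ^ r * (1 + t) ^ (-r) := by
  unfold tailKernel
  split_ifs with h1
  · have ht0 : 0 < t := one_pos.trans_le h1
    calc t ^ (-r) = 2 ^ r * (2 * t) ^ (-r) := by
          rw [Real.mul_rpow (by norm_num) ht0.le, ← mul_assoc, ← Real.rpow_add (by norm_num),
            add_neg_cancel, Real.rpow_zero, one_mul]
      _ ≤ 2 ^ r * (1 + t) ^ (-r) := by
          refine mul_le_mul_of_nonneg_left ?_ (by positivity)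
          exact Real.rpow_le_rpow_of_nonpos (by positivity) (by linarith) (neg_nonpos.2 hr)
  · positivity

section Kernel

variable {E : Type*} [NormedAddCommGroup E] [MeasurableSpace E] [BorelSpace E]

lemma lintegral_tailKernel_norm_lt_top [NormedSpace ℝ E] [FiniteDimensional ℝ E]
    (μ : Measure E) [μ.IsAddHaarMeasure] {r : ℝ} (hr : (Module.finrank ℝ E : ℝ) < r) :
    ∫⁻ z, ENNReal.ofReal (tailKernel r ‖z‖) ∂μ < ⊤ := by
  have hr0 : 0 ≤ r := (Nat.cast_nonneg _).trans hr.le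
  calc ∫⁻ z, ENNReal.ofReal (tailKernel r ‖z‖) ∂μ
      ≤ ∫⁻ z, ENNReal.ofReal (2 ^ r) * ENNReal.ofReal ((1 + ‖z‖) ^ (-r)) ∂μ := by
        refine lintegral_mono fun z => ?_
        rw [← ENNReal.ofReal_mul (by positivity)]
        exact ENNReal.ofReal_le_ofReal (tailKernel_le_two_rpow_mul hr0 (norm_nonneg z))
    _ = ENNReal.ofReal (2 ^ r) * ∫⁻ z, ENNReal.ofReal ((1 + ‖z‖) ^ (-r)) ∂μ :=
        lintegral_const_mul _ (by fun_prop)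
    _ < ⊤ := ENNReal.mul_lt_top ENNReal.ofReal_lt_top (finite_integral_one_add_norm hr)

variable {μ : Measure E} [μ.IsAddRightInvariant]

lemma setLIntegral_tailKernel_dist_le (r : ℝ) (Ω : Set E) (x : E) :
    ∫⁻ y in Ω, ENNReal.ofReal (tailKernel r (dist y x)) ∂μ ≤
      ∫⁻ z, ENNReal.ofReal (tailKernel r ‖z‖) ∂μ := by
  refine (setLIntegral_le_lintegral _ _).trans_eq ?_
  simp_rw [dist_eq_norm]
  exact lintegral_sub_right_eq_self (μ := μ) (fun z => ENNReal.ofReal (tailKernel r ‖z‖)) x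

lemma lintegral_lintegral_mul_tailKernel_le (r : ℝ) (Ω : Set E) {f : E → ℝ≥0∞}
    (hf : Measurable f) :
    ∫⁻ x in Ω, ∫⁻ y in Ω, f x * ENNReal.ofReal (tailKernel r (dist y x)) ∂μ ∂μ ≤
      (∫⁻ z, ENNReal.ofReal (tailKernel r ‖z‖) ∂μ) * ∫⁻ x in Ω, f x ∂μ := by
  calc ∫⁻ x in Ω, ∫⁻ y in Ω, f x * ENNReal.ofReal (tailKernel r (dist y x)) ∂μ ∂μ
      = ∫⁻ x in Ω, f x * ∫⁻ y in Ω, ENNReal.ofReal (tailKernel r (dist y x)) ∂μ ∂μ := by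
        refine lintegral_congr fun x => lintegral_const_mul _ ?_
        exact ((measurable_tailKernel r).comp
          (continuous_id.dist continuous_const).measurable).ennreal_ofReal
    _ ≤ ∫⁻ x in Ω, f x * ∫⁻ z, ENNReal.ofReal (tailKernel r ‖z‖) ∂μ ∂μ :=
        lintegral_mono fun x => mul_le_mul_right (setLIntegral_tailKernel_dist_le r Ω x) _
    _ = _ := by rw [lintegral_mul_const _ hf, mul_comm]

lemma lintegral_lintegral_mul_tailKernel_le' [SecondCountableTopology E] [SFinite μ] (r : ℝ)
    (Ω : Set E) {f : E → ℝ≥0∞} (hf : Measurable f) :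
    ∫⁻ x in Ω, ∫⁻ y in Ω, f y * ENNReal.ofReal (tailKernel r (dist y x)) ∂μ ∂μ ≤
      (∫⁻ z, ENNReal.ofReal (tailKernel r ‖z‖) ∂μ) * ∫⁻ x in Ω, f x ∂μ := by
  have hk : Measurable fun z : E × E => ENNReal.ofReal (tailKernel r (dist z.2 z.1)) :=
    ((measurable_tailKernel r).comp (continuous_snd.dist continuous_fst).measurable).ennreal_ofReal
  rw [lintegral_lintegral_swap ((hf.comp measurable_snd).mul hk).aemeasurable]
  simpa only [dist_comm] using lintegral_lintegral_mul_tailKernel_le (μ := μ) r Ω hf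

end Kernel

lemma sq_sub_div_rpow_le {r e f a b d : ℝ} (hd : 0 ≤ d) (hr : 0 < r) (hre : r ≤ e)
    (hef : e ≤ f) :
    (b - a) ^ 2 / d ^ e ≤ (b - a) ^ 2 / d ^ f + (2 * a ^ 2 + 2 * b ^ 2) * tailKernel r d := by
  have hK := tailKernel_nonneg r d
  rcases hd.eq_or_lt with rfl | hd0
  · rw [Real.zero_rpow (by linarith), div_zero]
    positivity
  rcases lt_or_ge d 1 with hd1 | hd1
  · have hdf : d ^ f ≤ d ^ e := Real.rpow_le_rpow_of_exponent_ge hd0 hd1.le hef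
    have : (b - a) ^ 2 / d ^ e ≤ (b - a) ^ 2 / d ^ f := by gcongr
    nlinarith [sq_nonneg a, sq_nonneg b]
  · have hde : d ^ (-e) ≤ d ^ (-r) := Real.rpow_le_rpow_of_exponent_le hd1 (by linarith)
    have hsq : (b - a) ^ 2 ≤ 2 * a ^ 2 + 2 * b ^ 2 := by nlinarith [sq_nonneg (a + b)]
    have : (b - a) ^ 2 / d ^ e ≤ (2 * a ^ 2 + 2 * b ^ 2) * tailKernel r d := by
      rw [div_eq_mul_inv, ← Real.rpow_neg hd, tailKernel, if_pos hd1]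
      exact mul_le_mul hsq hde (by positivity) (by positivity)
    have : 0 ≤ (b - a) ^ 2 / d ^ f := by positivity
    linarith

lemma ofReal_sq_sub_div_rpow_le {r e f a b d : ℝ} (hd : 0 ≤ d) (hr : 0 < r) (hre : r ≤ e)
    (hef : e ≤ f) :
    ENNReal.ofReal ((b - a) ^ 2 / d ^ e) ≤ ENNReal.ofReal ((b - a) ^ 2 / d ^ f) +
      (ENNReal.ofReal (2 * a ^ 2) * ENNReal.ofReal (tailKernel r d) +
        ENNReal.ofReal (2 * b ^ 2) * ENNReal.ofReal (tailKernel r d)) := by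
  have hK := tailKernel_nonneg r d
  rw [← ENNReal.ofReal_mul (by positivity), ← ENNReal.ofReal_mul (by positivity),
    ← ENNReal.ofReal_add (by positivity) (by positivity),
    ← ENNReal.ofReal_add (by positivity) (by positivity), ← add_mul]
  exact ENNReal.ofReal_le_ofReal (sq_sub_div_rpow_le hd hr hre hef)

lemma lintegral_lintegral_add_left {α β : Type*} [MeasurableSpace α] [MeasurableSpace β]
    {μ : Measure α} {ν : Measure β} [SFinite ν] {f : α → β → ℝ≥0∞}
    (hf : Measurable (Function.uncurry f)) (g : α → β → ℝ≥0∞) :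
    ∫⁻ x, ∫⁻ y, f x y + g x y ∂ν ∂μ = ∫⁻ x, ∫⁻ y, f x y ∂ν ∂μ + ∫⁻ x, ∫⁻ y, g x y ∂ν ∂μ := by
  have hf' : Measurable fun x => ∫⁻ y, f x y ∂ν := hf.lintegral_prod_right'
  rw [← lintegral_add_left hf']
  exact lintegral_congr fun x => lintegral_add_left (hf.comp measurable_prodMk_left) _

theorem gagVarSq_le_add_mul_l2Sq {n : ℕ} (Ω : Set (Euc n)) {s : ℝ} (hs : 0 < s)
    {p q : Euc n → ℝ} (hq : Measurable q) (hp : ∀ x, s ≤ p x) (hpq : ∀ x, p x ≤ q x)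
    {u : Euc n → ℝ} (hu : Measurable u) :
    gagVarSq n Ω p u ≤ gagVarSq n Ω q u +
      4 * (∫⁻ z : Euc n, ENNReal.ofReal (tailKernel (n + 2 * s) ‖z‖)) * l2Sq n Ω u := by
  set r : ℝ := n + 2 * s
  set I := ∫⁻ z : Euc n, ENNReal.ofReal (tailKernel r ‖z‖)
  set g : Euc n → ℝ≥0∞ := fun x => ENNReal.ofReal (2 * u x ^ 2)
  set k : Euc n → Euc n → ℝ≥0∞ := fun x y => ENNReal.ofReal (tailKernel r (dist y x))
  have hg : Measurable g := by fun_prop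
  have hk : Measurable (Function.uncurry k) :=
    ((measurable_tailKernel r).comp (continuous_snd.dist continuous_fst).measurable).ennreal_ofReal
  have hgag : Measurable (Function.uncurry fun x y : Euc n =>
      ENNReal.ofReal ((u y - u x) ^ 2 / dist y x ^ ((n : ℝ) + 2 * q x))) := by
    fun_prop
  have hg_int : ∫⁻ x in Ω, g x = 2 * l2Sq n Ω u := by
    rw [l2Sq, ← lintegral_const_mul _ (by fun_prop)]
    refine lintegral_congr fun x => ?_
    change ENNReal.ofReal (2 * u x ^ 2) = _
    rw [ENNReal.ofReal_mul zero_le_two, ENNReal.ofReal_ofNat]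
  calc gagVarSq n Ω p u
      ≤ ∫⁻ x in Ω, ∫⁻ y in Ω, ENNReal.ofReal ((u y - u x) ^ 2 / dist y x ^ ((n : ℝ) + 2 * q x)) +
          (g x * k x y + g y * k x y) :=
        lintegral_mono fun x => lintegral_mono fun y =>
          ofReal_sq_sub_div_rpow_le dist_nonneg (by positivity) (by linarith [hp x])
            (by linarith [hpq x])
    _ = gagVarSq n Ω q u +
          ((∫⁻ x in Ω, ∫⁻ y in Ω, g x * k x y) + ∫⁻ x in Ω, ∫⁻ y in Ω, g y * k x y) := by
        rw [gagVarSq, lintegral_lintegral_add_left hgag, lintegral_lintegral_add_left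
          ((hg.comp measurable_fst).mul hk)]
    _ ≤ gagVarSq n Ω q u + (I * (2 * l2Sq n Ω u) + I * (2 * l2Sq n Ω u)) := by
        rw [← hg_int]
        exact add_le_add le_rfl
          (add_le_add (lintegral_lintegral_mul_tailKernel_le (μ := volume) r Ω hg)
            (lintegral_lintegral_mul_tailKernel_le' (μ := volume) r Ω hg))
    _ = gagVarSq n Ω q u + 4 * I * l2Sq n Ω u := by ring

lemma sobNorm_le_of_gagVarSq_le {n : ℕ} {Ω : Set (Euc n)} {p q u : Euc n → ℝ} {K : ℝ≥0∞}
    (h : gagVarSq n Ω p u ≤ gagVarSq n Ω q u + K * l2Sq n Ω u) :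
    sobNorm n Ω p u ≤ (1 + K ^ (1 / 2 : ℝ)) * sobNorm n Ω q u := by
  set L := l2Sq n Ω u ^ (1 / 2 : ℝ)
  set G := gagVarSq n Ω q u ^ (1 / 2 : ℝ)
  have hsqrt : gagVarSq n Ω p u ^ (1 / 2 : ℝ) ≤ G + K ^ (1 / 2 : ℝ) * L :=
    calc gagVarSq n Ω p u ^ (1 / 2 : ℝ)
        ≤ (gagVarSq n Ω q u + K * l2Sq n Ω u) ^ (1 / 2 : ℝ) := by gcongr
      _ ≤ G + (K * l2Sq n Ω u) ^ (1 / 2 : ℝ) :=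
        ENNReal.rpow_add_le_add_rpow _ _ (by norm_num) (by norm_num)
      _ = G + K ^ (1 / 2 : ℝ) * L := by rw [ENNReal.mul_rpow_of_nonneg _ _ (by norm_num)]
  calc sobNorm n Ω p u ≤ L + (G + K ^ (1 / 2 : ℝ) * L) := add_le_add le_rfl hsqrt
    _ = L + G + K ^ (1 / 2 : ℝ) * L := by ring
    _ ≤ L + G + (K ^ (1 / 2 : ℝ) * L + K ^ (1 / 2 : ℝ) * G) := add_le_add le_rfl le_self_add
    _ = (1 + K ^ (1 / 2 : ℝ)) * sobNorm n Ω q u := by rw [sobNorm]; ring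

theorem stmt_1_general (n : ℕ) (Ω : Set (Euc n))
    (β : Euc n → ℝ) (βlo βhi : ℝ)
    (hlo : 0 < βlo) (hβcont : Continuous β)
    (hβ : ∀ x, βlo ≤ β x ∧ β x ≤ βhi) :
    ∃ C : ℝ≥0∞, 1 ≤ C ∧ C ≠ ⊤ ∧
      (∀ u : Euc n → ℝ, Measurable u →
        C⁻¹ * sobNorm n Ω (fun _ => βlo) u ≤ sobNorm n Ω β u ∧
        sobNorm n Ω β u ≤ C * sobNorm n Ω (fun _ => βhi) u) ∧
      {u : Euc n → ℝ | Measurable u ∧ sobNorm n Ω (fun _ => βhi) u ≠ ⊤} ⊆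
        {u : Euc n → ℝ | Measurable u ∧ sobNorm n Ω β u ≠ ⊤} ∧
      {u : Euc n → ℝ | Measurable u ∧ sobNorm n Ω β u ≠ ⊤} ⊆
        {u : Euc n → ℝ | Measurable u ∧ sobNorm n Ω (fun _ => βlo) u ≠ ⊤} := by
  set I := ∫⁻ z : Euc n, ENNReal.ofReal (tailKernel (n + 2 * βlo) ‖z‖)
  have hI : I ≠ ⊤ := (lintegral_tailKernel_norm_lt_top volume (by simpa using hlo)).ne
  set C := 1 + (4 * I) ^ (1 / 2 : ℝ)
  have hC : C ≠ ⊤ := by finiteness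
  have hlower : ∀ u, Measurable u → sobNorm n Ω (fun _ => βlo) u ≤ C * sobNorm n Ω β u :=
    fun u hu => sobNorm_le_of_gagVarSq_le <| gagVarSq_le_add_mul_l2Sq Ω hlo hβcont.measurable
      (fun _ => le_rfl) (fun x => (hβ x).1) hu
  have hupper : ∀ u, Measurable u → sobNorm n Ω β u ≤ C * sobNorm n Ω (fun _ => βhi) u :=
    fun u hu => sobNorm_le_of_gagVarSq_le <| gagVarSq_le_add_mul_l2Sq Ω hlo measurable_const
      (fun x => (hβ x).1) (fun x => (hβ x).2) hu
  refine ⟨C, le_self_add, hC, fun u hu => ⟨?_, hupper u hu⟩, ?_, ?_⟩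
  · exact (ENNReal.inv_mul_le_iff (by positivity) hC).2 (hlower u hu)
  · rintro u ⟨hu, hfin⟩
    exact ⟨hu, ne_top_of_le_ne_top (ENNReal.mul_ne_top hC hfin) (hupper u hu)⟩
  · rintro u ⟨hu, hfin⟩
    exact ⟨hu, ne_top_of_le_ne_top (ENNReal.mul_ne_top hC hfin) (hlower u hu)⟩

theorem stmt_1 (n : ℕ) (Ω : Set (Euc n)) (hΩ : MeasurableSet Ω)
    (β : Euc n → ℝ) (βlo βhi : ℝ)
    (hlo : 0 < βlo) (hhi : βhi < 1) (hβcont : Continuous β)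
    (hβ : ∀ x, βlo ≤ β x ∧ β x ≤ βhi) :
    ∃ C : ℝ≥0∞, 1 ≤ C ∧ C ≠ ⊤ ∧
      (∀ u : Euc n → ℝ, Measurable u →
        C⁻¹ * sobNorm n Ω (fun _ => βlo) u ≤ sobNorm n Ω β u ∧
        sobNorm n Ω β u ≤ C * sobNorm n Ω (fun _ => βhi) u) ∧
      {u : Euc n → ℝ | Measurable u ∧ sobNorm n Ω (fun _ => βhi) u ≠ ⊤} ⊆
        {u : Euc n → ℝ | Measurable u ∧ sobNorm n Ω β u ≠ ⊤} ∧
      {u : Euc n → ℝ | Measurable u ∧ sobNorm n Ω β u ≠ ⊤} ⊆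
        {u : Euc n → ℝ | Measurable u ∧ sobNorm n Ω (fun _ => βlo) u ≠ ⊤} :=
  stmt_1_general n Ω β βlo βhi hlo hβcont hβ
end
end

section
/- Let 0 < β* ≤ β^* < 1 and let Ω̃ be a bounded domain such that the embedding H^{β*}(Ω̃) ↪ L²(Ω̃) is compact. Then the embedding H^{β(·)}(Ω̃) ↪ L²(Ω̃) is compact, where β is continuous with β* ≤ β(x) ≤ β^*. -/
open MeasureTheory Set
open scoped ENNReal
noncomputable section

/-- Compactness of the embedding (of the space with norm `N`) into L²(Ω):
every `N`-bounded sequence has a subsequence converging in L²(Ω). -/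
def CompactEmbL2 (n : ℕ) (Ω : Set (Euc n)) (N : (Euc n → ℝ) → ℝ≥0∞) : Prop :=
  ∀ (u : ℕ → Euc n → ℝ) (M : ℝ≥0∞), (∀ k, Measurable (u k)) → M ≠ ⊤ →
    (∀ k, N (u k) ≤ M) →
    ∃ (φ : ℕ → ℕ) (v : Euc n → ℝ), StrictMono φ ∧
      Filter.Tendsto (fun k => l2Sq n Ω (fun x => u (φ k) x - v x))
        Filter.atTop (nhds 0)

theorem stmt_5 (n : ℕ) (Ω : Set (Euc n)) (hΩ : MeasurableSet Ω)
    (hbd : Bornology.IsBounded Ω)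
    (β : Euc n → ℝ) (βlo βhi : ℝ) (hlo : 0 < βlo) (hle : βlo ≤ βhi) (hhi : βhi < 1)
    (hβ : ∀ x, βlo ≤ β x ∧ β x ≤ βhi) (hβcont : Continuous β)
    (hcomp : CompactEmbL2 n Ω (sobNorm n Ω (fun _ => βlo))) :
    CompactEmbL2 n Ω (sobNorm n Ω β) := by
  -- diameter bound
  obtain ⟨R, hR⟩ := Metric.isBounded_iff.mp hbd
  set R' : ℝ := max R 1 with hR'def
  have hR'1 : (1 : ℝ) ≤ R' := le_max_right _ _
  have hR'0 : (0 : ℝ) ≤ R' := le_trans zero_le_one hR'1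
  set C : ℝ := R' ^ (2 * (βhi - βlo)) with hCdef
  have hC0 : 0 ≤ C := Real.rpow_nonneg hR'0 _
  -- pointwise comparison of the Gagliardo integrands on Ω × Ω
  have key : ∀ (v : Euc n → ℝ) (x y : Euc n), x ∈ Ω → y ∈ Ω →
      (v y - v x) ^ 2 / dist y x ^ ((n : ℝ) + 2 * βlo)
        ≤ C * ((v y - v x) ^ 2 / dist y x ^ ((n : ℝ) + 2 * β x)) := by
    intro v x y hx hy
    set d : ℝ := dist y x with hd
    have hd0 : 0 ≤ d := dist_nonneg
    have hdR : d ≤ R' := le_trans (hR hy hx) (le_max_left _ _)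
    rcases eq_or_lt_of_le hd0 with h0 | h0
    · -- d = 0, so v y = v x
      have hyx : y = x := by
        have := dist_eq_zero.mp h0.symm
        exact this
      subst hyx
      simp
    · -- d > 0
      have hΔ : (0 : ℝ) ≤ 2 * (β x - βlo) := by
        have := (hβ x).1; linarith
      have hΔ' : 2 * (β x - βlo) ≤ 2 * (βhi - βlo) := by
        have := (hβ x).2; linarith
      have hdpow : d ^ (2 * (β x - βlo)) ≤ C := by
        rcases le_or_gt d 1 with hd1 | hd1
        · calc d ^ (2 * (β x - βlo)) ≤ 1 := Real.rpow_le_one hd0 hd1 hΔ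
            _ ≤ C := Real.one_le_rpow hR'1 (le_trans hΔ hΔ')
        · calc d ^ (2 * (β x - βlo)) ≤ d ^ (2 * (βhi - βlo)) :=
              Real.rpow_le_rpow_of_exponent_le hd1.le hΔ'
            _ ≤ C := Real.rpow_le_rpow hd0 hdR (by linarith)
      have hsplit : d ^ ((n : ℝ) + 2 * β x)
          = d ^ ((n : ℝ) + 2 * βlo) * d ^ (2 * (β x - βlo)) := by
        rw [← Real.rpow_add h0]; ring_nf
      have hpos1 : 0 < d ^ ((n : ℝ) + 2 * βlo) := Real.rpow_pos_of_pos h0 _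
      have hpos2 : 0 < d ^ ((n : ℝ) + 2 * β x) := Real.rpow_pos_of_pos h0 _
      have hpos3 : 0 < d ^ (2 * (β x - βlo)) := Real.rpow_pos_of_pos h0 _
      have heq : (v y - v x) ^ 2 / d ^ ((n : ℝ) + 2 * βlo)
          = ((v y - v x) ^ 2 * d ^ (2 * (β x - βlo))) / d ^ ((n : ℝ) + 2 * β x) := by
        rw [hsplit]; field_simp
      rw [heq, mul_div_assoc']
      refine (div_le_div_iff_of_pos_right hpos2).mpr ?_
      calc (v y - v x) ^ 2 * d ^ (2 * (β x - βlo))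
          ≤ (v y - v x) ^ 2 * C := mul_le_mul_of_nonneg_left hdpow (sq_nonneg _)
        _ = C * (v y - v x) ^ 2 := by ring
  -- comparison of Gagliardo seminorms
  have gagcmp : ∀ v : Euc n → ℝ,
      gagVarSq n Ω (fun _ => βlo) v ≤ ENNReal.ofReal C * gagVarSq n Ω β v := by
    intro v
    unfold gagVarSq
    rw [← lintegral_const_mul' _ _ ENNReal.ofReal_ne_top]
    refine setLIntegral_mono' hΩ (fun x hx => ?_)
    rw [← lintegral_const_mul' _ _ ENNReal.ofReal_ne_top]
    refine setLIntegral_mono' hΩ (fun y hy => ?_)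
    rw [← ENNReal.ofReal_mul hC0]
    exact ENNReal.ofReal_le_ofReal (key v x y hx hy)
  set K : ℝ≥0∞ := max 1 ((ENNReal.ofReal C) ^ (1/2 : ℝ)) with hKdef
  have hKtop : K ≠ ⊤ := by
    rw [hKdef]
    simp only [ne_eq, max_eq_top, not_or]
    exact ⟨ENNReal.one_ne_top, ENNReal.rpow_ne_top_of_nonneg (by norm_num) ENNReal.ofReal_ne_top⟩
  have sobcmp : ∀ v : Euc n → ℝ,
      sobNorm n Ω (fun _ => βlo) v ≤ K * sobNorm n Ω β v := by
    intro v
    unfold sobNorm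
    rw [mul_add]
    gcongr
    · calc l2Sq n Ω v ^ (1/2 : ℝ) = 1 * l2Sq n Ω v ^ (1/2 : ℝ) := (one_mul _).symm
        _ ≤ K * l2Sq n Ω v ^ (1/2 : ℝ) := by
            gcongr; exact le_max_left _ _
    · calc gagVarSq n Ω (fun _ => βlo) v ^ (1/2 : ℝ)
          ≤ (ENNReal.ofReal C * gagVarSq n Ω β v) ^ (1/2 : ℝ) := by
            gcongr; exact gagcmp v
        _ = (ENNReal.ofReal C) ^ (1/2 : ℝ) * gagVarSq n Ω β v ^ (1/2 : ℝ) :=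
            ENNReal.mul_rpow_of_nonneg _ _ (by norm_num)
        _ ≤ K * gagVarSq n Ω β v ^ (1/2 : ℝ) := by
            gcongr; exact le_max_right _ _
  intro u M hmeas hM hbound
  exact hcomp u (K * M) hmeas (ENNReal.mul_ne_top hKtop hM)
    (fun k => le_trans (sobcmp (u k)) (mul_le_mul_right (hbound k) K))
end
end
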